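/- arXiv:2503.21159 — 3 statements merged into one kernel-verified Lean document; each statement's English description precedes it below -/
import Mathlib

section
/- Let f : ℝ → ℝ be differentiable with L-Lipschitz derivative (L > 0) and satisfy the Polyak–Łojasiewicz inequality with constant μ > 0 and lower bound f*. On a probability space with a filtration (F_t), let (C_t) be an adapted sequence of real random variables with C_0 constant, and let (G_t) be square-integrable random variables satisfying C_{t+1} = C_t − η·G_t, E[G_t | F_t] = f'(C_t) almost surely, and E[(G_t − f'(C_t))² | F_t] ≤ σ² almost surely, where 0 < η ≤ 1/L and σ ≥ 0, and assume f(C_t) and f'(C_t)² are integrable for each t. Then for every t ≥ 0: E[f(C_t) − f*] ≤ (1 − μη)^t · (f(C_0) − f*) + L·η·σ²/(2μ). (Stochastic form of the paper's Lemma 2: linear convergence of the clipping-norm iterates to an error floor determined by the gradient-noise variance.) -/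
open MeasureTheory


lemma descent_aux (f : ℝ → ℝ) (L : ℝ) (hf : Differentiable ℝ f)
    (hlip : ∀ x y : ℝ, |deriv f x - deriv f y| ≤ L * |x - y|) (x d : ℝ) :
    f (x + d) ≤ f x + deriv f x * d + L / 2 * d ^ 2 := by
  set g : ℝ → ℝ :=
    fun s => f (x + s * d) - s * (deriv f x * d) - s ^ 2 * (L / 2 * d ^ 2) with hgdef
  have hg : ∀ s : ℝ, HasDerivAt g
      (deriv f (x + s * d) * d - deriv f x * d - 2 * s * (L / 2 * d ^ 2)) s := by
    intro s
    have h1 : HasDerivAt (fun s : ℝ => x + s * d) d s := by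
      simpa using ((hasDerivAt_id s).mul_const d).const_add x
    have h2 : HasDerivAt (fun s : ℝ => f (x + s * d)) (deriv f (x + s * d) * d) s :=
      (hf (x + s * d)).hasDerivAt.comp s h1
    have h3 : HasDerivAt (fun s : ℝ => s * (deriv f x * d)) (deriv f x * d) s := by
      simpa using (hasDerivAt_id s).mul_const (deriv f x * d)
    have h4 : HasDerivAt (fun s : ℝ => s ^ 2 * (L / 2 * d ^ 2)) (2 * s * (L / 2 * d ^ 2)) s := by
      have := (hasDerivAt_pow 2 s).mul_const (L / 2 * d ^ 2)
      exact this.congr_deriv (by norm_num)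
    exact (h2.sub h3).sub h4
  have hdiff : Differentiable ℝ g := fun s => (hg s).differentiableAt
  have anti : AntitoneOn g (Set.Icc (0:ℝ) 1) := by
    apply antitoneOn_of_deriv_nonpos (convex_Icc 0 1) hdiff.continuous.continuousOn
      (fun s _ => (hdiff s).differentiableWithinAt)
    intro s hs
    rw [interior_Icc] at hs
    rw [(hg s).deriv]
    have hl := hlip (x + s * d) x
    rw [show x + s * d - x = s * d by ring] at hl
    have h5 : (deriv f (x + s * d) - deriv f x) * d ≤ L * s * d ^ 2 := by
      calc (deriv f (x + s * d) - deriv f x) * d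
          ≤ |(deriv f (x + s * d) - deriv f x) * d| := le_abs_self _
        _ = |deriv f (x + s * d) - deriv f x| * |d| := abs_mul _ _
        _ ≤ (L * |s * d|) * |d| := mul_le_mul_of_nonneg_right hl (abs_nonneg d)
        _ = L * (|s| * (|d| * |d|)) := by rw [abs_mul]; ring
        _ = L * s * d ^ 2 := by
            rw [abs_of_pos hs.1, abs_mul_abs_self]; ring
    nlinarith [h5]
  have h01 := anti (Set.left_mem_Icc.2 zero_le_one) (Set.right_mem_Icc.2 zero_le_one) zero_le_one
  simp only [hgdef, one_mul, zero_mul, one_pow, mul_zero, sub_zero, add_zero,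
    ne_eq, OfNat.ofNat_ne_zero, not_false_eq_true, zero_pow] at h01
  linarith

theorem rec_step_aux {Ω : Type*} {m0 : MeasurableSpace Ω}
    (P : Measure Ω) [IsProbabilityMeasure P] (F : Filtration ℕ m0)
    (f : ℝ → ℝ) (L μ fstar η σ : ℝ)
    (hL : 0 < L) (hμ : 0 < μ) (hσ : 0 ≤ σ)
    (hf : Differentiable ℝ f)
    (hlip : ∀ x y : ℝ, |deriv f x - deriv f y| ≤ L * |x - y|)
    (hPL : ∀ x : ℝ, μ * (f x - fstar) ≤ (1 / 2) * (deriv f x) ^ 2)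
    (hη0 : 0 < η) (hη : η ≤ 1 / L)
    (C G : ℕ → Ω → ℝ)
    (hadapted : StronglyAdapted F C)
    (hG2 : ∀ t, MemLp (G t) 2 P)
    (hupd : ∀ t, C (t + 1) = fun ω => C t ω - η * G t ω)
    (hmean : ∀ t, P[G t | F t] =ᵐ[P] fun ω => deriv f (C t ω))
    (hvar : ∀ t, ∀ᵐ ω ∂P,
      (P[fun ω' => (G t ω' - deriv f (C t ω')) ^ 2 | F t]) ω ≤ σ ^ 2)
    (hfint : ∀ t, Integrable (fun ω => f (C t ω)) P)
    (hgint : ∀ t, Integrable (fun ω => (deriv f (C t ω)) ^ 2) P) (t : ℕ) :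
    ∫ ω, (f (C (t+1) ω) - fstar) ∂P ≤
      (1 - μ * η) * ∫ ω, (f (C t ω) - fstar) ∂P + L * η ^ 2 * σ ^ 2 / 2 := by
  have hcont : Continuous (deriv f) := by
    apply (LipschitzWith.of_dist_le_mul (K := L.toNNReal) ?_).continuous
    intro a b
    rw [Real.dist_eq, Real.dist_eq, Real.coe_toNNReal L hL.le]
    exact hlip a b
  set D : Ω → ℝ := fun ω => deriv f (C t ω) with hDdef
  have hDsm : StronglyMeasurable[F t] D :=
    hcont.comp_stronglyMeasurable (hadapted t)
  have hDasm : AEStronglyMeasurable D P := (hDsm.mono (F.le t)).aestronglyMeasurable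
  have hD2 : MemLp D 2 P := (memLp_two_iff_integrable_sq hDasm).2 (hgint t)
  have hGasm : AEStronglyMeasurable (G t) P := (hG2 t).aestronglyMeasurable
  have hGsq : Integrable (fun ω => (G t ω) ^ 2) P :=
    (memLp_two_iff_integrable_sq hGasm).1 (hG2 t)
  have hGint : Integrable (G t) P := (hG2 t).integrable one_le_two
  -- product integrable via AM-GM
  have hDG : Integrable (fun ω => D ω * G t ω) P := by
    have hsum : Integrable (fun ω => D ω ^ 2 + G t ω ^ 2) P := by exact (hgint t).add hGsq
    refine Integrable.mono' (hsum.const_mul (1/2)) (hDasm.mul hGasm) ?_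
    filter_upwards with ω
    rw [norm_mul, Real.norm_eq_abs, Real.norm_eq_abs]
    nlinarith [sq_nonneg (|D ω| - |G t ω|), sq_abs (D ω), sq_abs (G t ω),
      abs_nonneg (D ω), abs_nonneg (G t ω)]
  -- E[D·G] = E[D²]
  have hpull : P[(fun ω => D ω * G t ω) | F t] =ᵐ[P] fun ω => D ω * (P[G t | F t]) ω := by
    have := condExp_mul_of_stronglyMeasurable_left (μ := P) hDsm (by exact hDG) hGint
    filter_upwards [this] with ω h using h
  have hDsq : Integrable (fun ω => D ω ^ 2) P := hgint t
  have hEDG : ∫ ω, D ω * G t ω ∂P = ∫ ω, D ω ^ 2 ∂P := by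
    have h0 : ∫ ω, D ω * G t ω ∂P
        = ∫ ω, (P[(fun ω' => D ω' * G t ω') | F t]) ω ∂P :=
      (integral_condExp (F.le t)).symm
    rw [h0]
    have heq : P[(fun ω => D ω * G t ω) | F t] =ᵐ[P] fun ω => D ω ^ 2 := by
      filter_upwards [hpull, hmean t] with ω h1 h2
      rw [h1, h2]; ring
    exact integral_congr_ae heq
  -- variance bound
  have hdiff2 : MemLp (fun ω => G t ω - D ω) 2 P := (hG2 t).sub hD2
  have hdiffsq : Integrable (fun ω => (G t ω - D ω) ^ 2) P :=
    (memLp_two_iff_integrable_sq hdiff2.aestronglyMeasurable).1 hdiff2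
  have hVar : ∫ ω, (G t ω - D ω) ^ 2 ∂P ≤ σ ^ 2 := by
    have h0 : ∫ ω, (G t ω - D ω) ^ 2 ∂P
        = ∫ ω, (P[(fun ω' => (G t ω' - D ω') ^ 2) | F t]) ω ∂P :=
      (integral_condExp (F.le t)).symm
    rw [h0]
    calc ∫ ω, (P[fun ω' => (G t ω' - D ω') ^ 2 | F t]) ω ∂P
        ≤ ∫ _, σ ^ 2 ∂P := integral_mono_ae integrable_condExp (integrable_const _) (hvar t)
      _ = σ ^ 2 := by simp
  -- second moment bound
  have hEG2 : ∫ ω, (G t ω) ^ 2 ∂P ≤ σ ^ 2 + ∫ ω, D ω ^ 2 ∂P := by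
    have hid : (fun ω => (G t ω) ^ 2) =
        fun ω => (G t ω - D ω) ^ 2 + 2 * (D ω * G t ω) - D ω ^ 2 := by
      funext ω; ring
    have hA : Integrable (fun ω => (G t ω - D ω) ^ 2 + 2 * (D ω * G t ω)) P := by
      exact hdiffsq.add (hDG.const_mul 2)
    have hB : Integrable (fun ω => 2 * (D ω * G t ω)) P := by exact hDG.const_mul 2
    rw [hid, integral_sub hA hDsq, integral_add hdiffsq hB, integral_const_mul, hEDG]
    linarith
  -- descent inequality
  have hpt : ∀ ω, f (C (t+1) ω) ≤
      f (C t ω) - η * (D ω * G t ω) + L / 2 * η ^ 2 * (G t ω) ^ 2 := by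
    intro ω
    have hd := descent_aux f L hf hlip (C t ω) (-(η * G t ω))
    rw [hupd t]
    calc f (C t ω - η * G t ω) = f (C t ω + -(η * G t ω)) := by ring_nf
      _ ≤ f (C t ω) + deriv f (C t ω) * -(η * G t ω) + L / 2 * (-(η * G t ω)) ^ 2 := hd
      _ = f (C t ω) - η * (D ω * G t ω) + L / 2 * η ^ 2 * (G t ω) ^ 2 := by
          rw [hDdef]; ring
  have hint_rhs : Integrable
      (fun ω => f (C t ω) - η * (D ω * G t ω) + L / 2 * η ^ 2 * (G t ω) ^ 2) P := by
    exact ((hfint t).sub (hDG.const_mul η)).add (hGsq.const_mul (L / 2 * η ^ 2))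
  have hstep : ∫ ω, f (C (t+1) ω) ∂P ≤
      ∫ ω, f (C t ω) ∂P - η * ∫ ω, D ω ^ 2 ∂P
        + L / 2 * η ^ 2 * ∫ ω, (G t ω) ^ 2 ∂P := by
    calc ∫ ω, f (C (t+1) ω) ∂P
        ≤ ∫ ω, (f (C t ω) - η * (D ω * G t ω) + L / 2 * η ^ 2 * (G t ω) ^ 2) ∂P :=
          integral_mono (hfint (t+1)) hint_rhs hpt
      _ = ∫ ω, f (C t ω) ∂P - η * ∫ ω, D ω ^ 2 ∂P
            + L / 2 * η ^ 2 * ∫ ω, (G t ω) ^ 2 ∂P := by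
          have hA : Integrable (fun ω => f (C t ω) - η * (D ω * G t ω)) P := by
            exact (hfint t).sub (hDG.const_mul η)
          have hB : Integrable (fun ω => L / 2 * η ^ 2 * G t ω ^ 2) P := by
            exact hGsq.const_mul _
          have hC : Integrable (fun ω => η * (D ω * G t ω)) P := by
            exact hDG.const_mul η
          rw [integral_add hA hB, integral_sub (hfint t) hC, integral_const_mul,
            integral_const_mul, hEDG]
  -- PL integrated
  have hsub : ∀ s : ℕ, ∫ ω, (f (C s ω) - fstar) ∂P = (∫ ω, f (C s ω) ∂P) - fstar := by
    intro s
    rw [integral_sub (hfint s) (integrable_const _)]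
    simp
  have hPLint : μ * ∫ ω, (f (C t ω) - fstar) ∂P ≤ (1/2) * ∫ ω, D ω ^ 2 ∂P := by
    have h1 : ∫ ω, μ * (f (C t ω) - fstar) ∂P ≤ ∫ ω, (1/2) * D ω ^ 2 ∂P :=
      integral_mono (((hfint t).sub (integrable_const _)).const_mul μ)
        ((hgint t).const_mul (1/2)) (fun ω => hPL (C t ω))
    rwa [integral_const_mul, integral_const_mul] at h1
  have hID0 : 0 ≤ ∫ ω, D ω ^ 2 ∂P := integral_nonneg (fun ω => sq_nonneg _)
  have hLη : L * η ≤ 1 := by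
    calc L * η ≤ L * (1/L) := by exact mul_le_mul_of_nonneg_left hη hL.le
      _ = 1 := by field_simp
  rw [hsub (t+1), hsub t]
  set ID := ∫ ω, D ω ^ 2 ∂P
  set IG := ∫ ω, (G t ω) ^ 2 ∂P
  set If := ∫ ω, f (C t ω) ∂P
  have hηID : μ * η * (If - fstar) ≤ η / 2 * ID := by
    have := mul_le_mul_of_nonneg_left hPLint hη0.le
    rw [hsub t] at this
    nlinarith
  nlinarith [mul_le_mul_of_nonneg_left hEG2 (by positivity : (0:ℝ) ≤ L / 2 * η ^ 2),
    mul_nonneg (mul_nonneg (sub_nonneg.2 hLη) hη0.le) hID0]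

/-- Stochastic form of the paper's Lemma 2: linear convergence of the
clipping-norm iterates to an error floor determined by the gradient-noise
variance. -/
theorem stmt_1 {Ω : Type*} {m0 : MeasurableSpace Ω}
    (P : Measure Ω) [IsProbabilityMeasure P] (F : Filtration ℕ m0)
    (f : ℝ → ℝ) (L μ fstar η σ c0 : ℝ)
    (hL : 0 < L) (hμ : 0 < μ) (hσ : 0 ≤ σ)
    (hf : Differentiable ℝ f)
    (hlip : ∀ x y : ℝ, |deriv f x - deriv f y| ≤ L * |x - y|)
    (hlb : ∀ x : ℝ, fstar ≤ f x)
    (hPL : ∀ x : ℝ, μ * (f x - fstar) ≤ (1 / 2) * (deriv f x) ^ 2)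
    (hη0 : 0 < η) (hη : η ≤ 1 / L)
    (C G : ℕ → Ω → ℝ)
    (hadapted : StronglyAdapted F C)
    (hC0 : C 0 = fun _ => c0)
    (hG2 : ∀ t, MemLp (G t) 2 P)
    (hupd : ∀ t, C (t + 1) = fun ω => C t ω - η * G t ω)
    (hmean : ∀ t, P[G t | F t] =ᵐ[P] fun ω => deriv f (C t ω))
    (hvar : ∀ t, ∀ᵐ ω ∂P,
      (P[fun ω' => (G t ω' - deriv f (C t ω')) ^ 2 | F t]) ω ≤ σ ^ 2)
    (hfint : ∀ t, Integrable (fun ω => f (C t ω)) P)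
    (hgint : ∀ t, Integrable (fun ω => (deriv f (C t ω)) ^ 2) P) :
    ∀ t : ℕ, ∫ ω, (f (C t ω) - fstar) ∂P ≤
      (1 - μ * η) ^ t * (f c0 - fstar) + L * η * σ ^ 2 / (2 * μ) := by
  have hrec := rec_step_aux P F f L μ fstar η σ hL hμ hσ hf hlip hPL hη0 hη C G
    hadapted hG2 hupd hmean hvar hfint hgint
  have ha0 : ∫ ω, (f (C 0 ω) - fstar) ∂P = f c0 - fstar := by
    rw [hC0]; simp
  by_cases hx : ∃ x, fstar < f x
  · -- μ ≤ L, so 0 ≤ 1 - μ * η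
    obtain ⟨x, hxlt⟩ := hx
    set d := deriv f x with hd
    have hdesc := descent_aux f L hf hlip x (-(d / L))
    rw [← hd] at hdesc
    have hlbx := hlb (x + -(d / L))
    have heq : d * -(d / L) + L / 2 * (-(d / L)) ^ 2 = -(d ^ 2 / (2 * L)) := by
      field_simp; ring
    have h1 : d ^ 2 / (2 * L) ≤ f x - fstar := by
      linarith [hdesc, hlbx, heq]
    have h2 : d ^ 2 ≤ 2 * L * (f x - fstar) := by
      rw [div_le_iff₀ (by positivity)] at h1; linarith
    have hμL : μ ≤ L := by nlinarith [hPL x]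
    have hLη : L * η ≤ 1 := by
      calc L * η ≤ L * (1 / L) := mul_le_mul_of_nonneg_left hη hL.le
        _ = 1 := by field_simp
    have hq0 : 0 ≤ 1 - μ * η := by nlinarith [mul_le_mul_of_nonneg_right hμL hη0.le]
    have hfloor : (1 - μ * η) * (L * η * σ ^ 2 / (2 * μ)) + L * η ^ 2 * σ ^ 2 / 2
        = L * η * σ ^ 2 / (2 * μ) := by field_simp; ring
    intro t
    induction t with
    | zero =>
        rw [ha0]
        have : (0:ℝ) ≤ L * η * σ ^ 2 / (2 * μ) := by positivity
        simp only [pow_zero, one_mul]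
        linarith
    | succ t ih =>
        calc ∫ ω, (f (C (t+1) ω) - fstar) ∂P
            ≤ (1 - μ * η) * ∫ ω, (f (C t ω) - fstar) ∂P + L * η ^ 2 * σ ^ 2 / 2 := hrec t
          _ ≤ (1 - μ * η) * ((1 - μ * η) ^ t * (f c0 - fstar) + L * η * σ ^ 2 / (2 * μ))
              + L * η ^ 2 * σ ^ 2 / 2 := by
              have := mul_le_mul_of_nonneg_left ih hq0
              linarith
          _ = (1 - μ * η) ^ (t+1) * (f c0 - fstar) + L * η * σ ^ 2 / (2 * μ) := by
              rw [pow_succ]; linear_combination hfloor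
  · push_neg at hx
    have hfx : ∀ y : ℝ, f y = fstar := fun y => le_antisymm (hx y) (hlb y)
    intro t
    have : ∫ ω, (f (C t ω) - fstar) ∂P = 0 := by
      simp [hfx]
    rw [this, hfx c0]
    have : (0:ℝ) ≤ L * η * σ ^ 2 / (2 * μ) := by positivity
    simp only [sub_self, mul_zero]
    linarith
end

section
/- Let K ≥ 1, let w_1, …, w_K be nonnegative reals with Σ_k w_k = 1, and let L_1, …, L_K : E → ℝ (E a finite-dimensional real inner product space) be differentiable functions whose gradients are M-Lipschitz (M > 0). Set L = Σ_k w_k·L_k, and assume L satisfies the Polyak–Łojasiewicz inequality with constant μ > 0 and lower bound L*. Given a point θ ∈ E, points θ^1, …, θ^K ∈ E, a step size η with 0 < η, and the aggregated direction ḡ = Σ_k w_k·∇L_k(θ^k), the update θ⁺ = θ − η·ḡ satisfies L(θ⁺) − L* ≤ (1 − μη)·(L(θ) − L*) + (η/2)·(−1 + M·η)·‖ḡ‖² + (η·M²/2)·Σ_k w_k·‖θ − θ^k‖². (Deterministic one-round recursion underlying the paper's Lemma 1 on convergence of the federated learning algorithm.) -/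
open scoped RealInnerProductSpace

section Aux
variable {E : Type*} [NormedAddCommGroup E] [InnerProductSpace ℝ E] [CompleteSpace E]

lemma hasDeriv_comp_line
    (f : E → ℝ) (hf : Differentiable ℝ f) (x v : E) (t : ℝ) :
    HasDerivAt (fun t : ℝ => f (x + t • v)) ⟪gradient f (x + t • v), v⟫ t := by
  have h1 : HasDerivAt (fun t : ℝ => x + t • v) v t := by
    simpa using ((hasDerivAt_id t).smul_const v).const_add x
  have h2 : HasGradientAt f (gradient f (x + t • v)) (x + t • v) :=
    (hf _).hasGradientAt
  have := (h2.hasFDerivAt.comp_hasDerivAt t h1)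
  refine HasDerivAt.congr_deriv (by exact this) ?_
  simp [InnerProductSpace.toDual]

lemma descent
    (f : E → ℝ) (M : ℝ) (hf : Differentiable ℝ f)
    (hlip : ∀ x y, ‖gradient f x - gradient f y‖ ≤ M * ‖x - y‖) (x v : E) :
    f (x + v) ≤ f x + ⟪gradient f x, v⟫ + M / 2 * ‖v‖ ^ 2 := by
  set g : ℝ → ℝ := fun t => f (x + t • v) - t * ⟪gradient f x, v⟫ - M * t ^ 2 / 2 * ‖v‖ ^ 2
    with hg
  have hder : ∀ t : ℝ, HasDerivAt g
      (⟪gradient f (x + t • v), v⟫ - ⟪gradient f x, v⟫ - M * t * ‖v‖ ^ 2) t := by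
    intro t
    have h1 := hasDeriv_comp_line f hf x v t
    have h2 : HasDerivAt (fun t : ℝ => t * ⟪gradient f x, v⟫) ⟪gradient f x, v⟫ t := by
      simpa using (hasDerivAt_id t).mul_const ⟪gradient f x, v⟫
    have h3 : HasDerivAt (fun t : ℝ => M * t ^ 2 / 2 * ‖v‖ ^ 2) (M * t * ‖v‖ ^ 2) t := by
      have : HasDerivAt (fun t : ℝ => t ^ 2) (2 * t) t := by
        simpa using hasDerivAt_pow 2 t
      have := ((this.const_mul M).div_const 2).mul_const (‖v‖ ^ 2)
      refine HasDerivAt.congr_deriv (by exact this) ?_; ring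
    exact (h1.sub h2).sub h3
  have hgd : Differentiable ℝ g := fun t => (hder t).differentiableAt
  have hmono : AntitoneOn g (Set.Icc 0 1) := by
    apply antitoneOn_of_deriv_nonpos (convex_Icc 0 1)
      (hgd.continuous.continuousOn) (hgd.differentiableOn)
    intro t ht
    rw [(hder t).deriv]
    rw [interior_Icc] at ht
    have ht0 : (0:ℝ) ≤ t := le_of_lt ht.1
    have h1 : ⟪gradient f (x + t • v), v⟫ - ⟪gradient f x, v⟫
        = ⟪gradient f (x + t • v) - gradient f x, v⟫ := (inner_sub_left _ _ _).symm
    have h2 : ⟪gradient f (x + t • v) - gradient f x, v⟫ ≤ M * t * ‖v‖ ^ 2 := by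
      calc ⟪gradient f (x + t • v) - gradient f x, v⟫
          ≤ ‖gradient f (x + t • v) - gradient f x‖ * ‖v‖ := real_inner_le_norm _ _
        _ ≤ (M * ‖x + t • v - x‖) * ‖v‖ := by
            gcongr; exact hlip _ _
        _ = M * t * ‖v‖ ^ 2 := by
            simp [norm_smul, abs_of_nonneg ht0]; ring
    linarith [h1 ▸ h2]
  have := hmono (Set.left_mem_Icc.2 zero_le_one) (Set.right_mem_Icc.2 zero_le_one) zero_le_one
  simp only [hg] at this
  simp only [zero_smul, add_zero, one_smul, one_pow] at this
  linarith

lemma grad_wsum {K : ℕ}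
    (w : Fin K → ℝ) (Lk : Fin K → E → ℝ) (hdiff : ∀ k, Differentiable ℝ (Lk k)) (x : E) :
    gradient (fun x => ∑ k, w k * Lk k x) x = ∑ k, w k • gradient (Lk k) x := by
  have h : HasGradientAt (fun x => ∑ k, w k * Lk k x)
      (∑ k, w k • gradient (Lk k) x) x := by
    rw [hasGradientAt_iff_hasFDerivAt]
    have hk : ∀ k : Fin K, HasFDerivAt (fun x => w k * Lk k x)
        (w k • (InnerProductSpace.toDual ℝ E (gradient (Lk k) x) : E →L[ℝ] ℝ)) x := fun k =>
      ((hdiff k x).hasGradientAt.hasFDerivAt).const_mul (w k)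
    have := HasFDerivAt.fun_sum (fun k (_ : k ∈ Finset.univ) => hk k)
    simpa [map_sum, map_smul] using this
  exact h.gradient

end Aux

/-- Deterministic one-round recursion underlying the paper's Lemma 1 on
convergence of the federated learning algorithm. -/
theorem stmt_5 {E : Type*} [NormedAddCommGroup E] [InnerProductSpace ℝ E]
    [FiniteDimensional ℝ E]
    (K : ℕ) (hK : 1 ≤ K)
    (w : Fin K → ℝ) (hw : ∀ k, 0 ≤ w k) (hwsum : ∑ k, w k = 1)
    (Lk : Fin K → E → ℝ) (M μ Lstar η : ℝ)
    (hM : 0 < M) (hμ : 0 < μ) (hη : 0 < η)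
    (hdiff : ∀ k, Differentiable ℝ (Lk k))
    (hlip : ∀ k, ∀ x y : E, ‖gradient (Lk k) x - gradient (Lk k) y‖ ≤ M * ‖x - y‖)
    (Lfun : E → ℝ) (hLdef : Lfun = fun x => ∑ k, w k * Lk k x)
    (hlb : ∀ x, Lstar ≤ Lfun x)
    (hPL : ∀ x, μ * (Lfun x - Lstar) ≤ (1 / 2) * ‖gradient Lfun x‖ ^ 2)
    (θ : E) (θk : Fin K → E)
    (gbar : E) (hgbar : gbar = ∑ k, w k • gradient (Lk k) (θk k)) :
    Lfun (θ - η • gbar) - Lstar ≤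
      (1 - μ * η) * (Lfun θ - Lstar)
        + (η / 2) * (-1 + M * η) * ‖gbar‖ ^ 2
        + (η * M ^ 2 / 2) * ∑ k, w k * ‖θ - θk k‖ ^ 2 := by
  haveI : CompleteSpace E := FiniteDimensional.complete ℝ E
  have hLdiff : Differentiable ℝ Lfun := by
    rw [hLdef]
    exact Differentiable.fun_sum (fun k _ => (hdiff k).const_mul (w k))
  have hgrad : ∀ x, gradient Lfun x = ∑ k, w k • gradient (Lk k) x := by
    intro x; rw [hLdef]; exact grad_wsum w Lk hdiff x
  have hLlip : ∀ x y, ‖gradient Lfun x - gradient Lfun y‖ ≤ M * ‖x - y‖ := by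
    intro x y
    rw [hgrad, hgrad, ← Finset.sum_sub_distrib]
    calc ‖∑ k, (w k • gradient (Lk k) x - w k • gradient (Lk k) y)‖
        ≤ ∑ k, ‖w k • gradient (Lk k) x - w k • gradient (Lk k) y‖ :=
          norm_sum_le _ _
      _ ≤ ∑ k, w k * (M * ‖x - y‖) := by
          apply Finset.sum_le_sum
          intro k _
          rw [← smul_sub, norm_smul, Real.norm_eq_abs, abs_of_nonneg (hw k)]
          exact mul_le_mul_of_nonneg_left (hlip k x y) (hw k)
      _ = M * ‖x - y‖ := by rw [← Finset.sum_mul, hwsum, one_mul]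
  -- descent step
  have hdesc : Lfun (θ - η • gbar) ≤
      Lfun θ - η * ⟪gradient Lfun θ, gbar⟫ + M / 2 * (η ^ 2 * ‖gbar‖ ^ 2) := by
    have := descent Lfun M hLdiff hLlip θ (-(η • gbar))
    have e1 : θ + -(η • gbar) = θ - η • gbar := by abel
    have e2 : ⟪gradient Lfun θ, -(η • gbar)⟫ = -(η * ⟪gradient Lfun θ, gbar⟫) := by
      rw [inner_neg_right, real_inner_smul_right]
    have e3 : ‖-(η • gbar)‖ ^ 2 = η ^ 2 * ‖gbar‖ ^ 2 := by
      rw [norm_neg, norm_smul, Real.norm_eq_abs, mul_pow, sq_abs]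
    rw [e1, e2, e3] at this
    linarith
  set G := gradient Lfun θ with hG
  -- polarization
  have hpol : ⟪G, gbar⟫ = (‖G‖ ^ 2 + ‖gbar‖ ^ 2 - ‖G - gbar‖ ^ 2) / 2 := by
    have := norm_sub_sq_real G gbar
    linarith
  -- variance bound
  have hvar : ‖G - gbar‖ ^ 2 ≤ M ^ 2 * ∑ k, w k * ‖θ - θk k‖ ^ 2 := by
    have hdiffsum : G - gbar = ∑ k, w k • (gradient (Lk k) θ - gradient (Lk k) (θk k)) := by
      rw [hG, hgrad, hgbar, ← Finset.sum_sub_distrib]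
      simp [smul_sub]
    have h1 : ‖G - gbar‖ ≤ ∑ k, w k * (M * ‖θ - θk k‖) := by
      rw [hdiffsum]
      refine (norm_sum_le _ _).trans (Finset.sum_le_sum fun k _ => ?_)
      rw [norm_smul, Real.norm_eq_abs, abs_of_nonneg (hw k)]
      exact mul_le_mul_of_nonneg_left (hlip k _ _) (hw k)
    have h2 : (∑ k, w k * (M * ‖θ - θk k‖)) ^ 2
        ≤ (∑ k, w k) * ∑ k, w k * (M * ‖θ - θk k‖) ^ 2 := by
      apply Finset.sum_sq_le_sum_mul_sum_of_sq_eq_mul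
      · intro k _; exact hw k
      · intro k _; exact mul_nonneg (hw k) (sq_nonneg _)
      · intro k _; ring
    have h3 : (∑ k, w k) * ∑ k, w k * (M * ‖θ - θk k‖) ^ 2
        = M ^ 2 * ∑ k, w k * ‖θ - θk k‖ ^ 2 := by
      rw [hwsum, one_mul, Finset.mul_sum]
      congr 1; ext k; ring
    have h0 : 0 ≤ ∑ k, w k * (M * ‖θ - θk k‖) :=
      Finset.sum_nonneg fun k _ => mul_nonneg (hw k)
        (mul_nonneg hM.le (norm_nonneg _))
    calc ‖G - gbar‖ ^ 2 ≤ (∑ k, w k * (M * ‖θ - θk k‖)) ^ 2 := by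
          exact pow_le_pow_left₀ (norm_nonneg _) h1 2
      _ ≤ _ := h2.trans (le_of_eq h3)
  -- PL
  have hpl := hPL θ
  rw [← hG] at hpl
  nlinarith [hdesc, hpol, hvar, norm_nonneg (G - gbar), sq_nonneg ‖gbar‖, hη.le]
end

section
/- Let K ≥ 1 and let ĝ^1, …, ĝ^K be independent square-integrable random vectors in a finite-dimensional real inner product space E, with means g^k = E[ĝ^k], and suppose there are constants B_1 ≥ 0 and B_2 ≥ 0 with E[‖ĝ^k − g^k‖²] ≤ B_1·‖g^k‖² + B_2² for each k. Set ĝ = (1/K)·Σ_k ĝ^k. Then E[‖ĝ‖²] ≤ ((B_1 + K)/K²)·Σ_k ‖g^k‖² + B_2²/K. (Second-moment bound for the averaged client gradient estimator in the proof of the paper's Lemma 1.) -/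
open MeasureTheory ProbabilityTheory RealInnerProductSpace

private lemma aux_integrable_inner {Ω : Type*} [MeasurableSpace Ω] (P : Measure Ω)
    {E : Type*} [NormedAddCommGroup E] [InnerProductSpace ℝ E]
    {f g : Ω → E} (hf : MemLp f 2 P) (hg : MemLp g 2 P) :
    Integrable (fun ω => ⟪f ω, g ω⟫) P := by
  have h := L2.integrable_inner (𝕜 := ℝ) (hf.toLp f) (hg.toLp g)
  apply h.congr
  filter_upwards [hf.coeFn_toLp, hg.coeFn_toLp] with ω h1 h2
  rw [h1, h2]

/-- Second-moment bound for the averaged client gradient estimator in the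
proof of the paper's Lemma 1. -/
theorem stmt_9 {Ω : Type*} {m0 : MeasurableSpace Ω}
    (P : Measure Ω) [IsProbabilityMeasure P]
    {E : Type*} [NormedAddCommGroup E] [InnerProductSpace ℝ E]
    [FiniteDimensional ℝ E] [MeasurableSpace E] [BorelSpace E]
    (K : ℕ) (hK : 1 ≤ K)
    (ghat : Fin K → Ω → E)
    (hindep : iIndepFun ghat P)
    (hL2 : ∀ k, MemLp (ghat k) 2 P)
    (g : Fin K → E) (hg : ∀ k, g k = ∫ ω, ghat k ω ∂P)
    (B1 B2 : ℝ) (hB1 : 0 ≤ B1) (hB2 : 0 ≤ B2)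
    (hvar : ∀ k, ∫ ω, ‖ghat k ω - g k‖ ^ 2 ∂P ≤ B1 * ‖g k‖ ^ 2 + B2 ^ 2) :
    ∫ ω, ‖(K : ℝ)⁻¹ • (∑ k, ghat k ω)‖ ^ 2 ∂P ≤
      ((B1 + K) / (K : ℝ) ^ 2) * ∑ k, ‖g k‖ ^ 2 + B2 ^ 2 / (K : ℝ) := by
  have hKr : (0:ℝ) < (K:ℝ) := by exact_mod_cast hK
  set Y : Fin K → Ω → E := fun k ω => ghat k ω - g k with hYdef
  have hY2 : ∀ k, MemLp (Y k) 2 P := fun k => (hL2 k).sub (memLp_const _)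
  have hgi : ∀ k, Integrable (ghat k) P := fun k => (hL2 k).integrable one_le_two
  have hYi : ∀ k, Integrable (Y k) P := fun k => (hY2 k).integrable one_le_two
  have hY0 : ∀ k, ∫ ω, Y k ω ∂P = 0 := by
    intro k
    simp only [hYdef]
    rw [integral_sub (hgi k) (integrable_const _), integral_const, ← hg k]
    simp
  have hindepY : iIndepFun Y P :=
    hindep.comp (fun k x => x - g k) (fun k => measurable_id.sub measurable_const)
  set S : Ω → E := fun ω => ∑ k, Y k ω with hSdef
  have hS2 : MemLp S 2 P := memLp_finset_sum _ (fun k _ => hY2 k)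
  have hSi : Integrable S P := integrable_finset_sum _ (fun k _ => hYi k)
  have hS0 : ∫ ω, S ω ∂P = 0 := by
    rw [hSdef, integral_finset_sum _ (fun k _ => hYi k)]
    simp [hY0]
  -- cross terms vanish
  have cross : ∀ j k : Fin K, j ≠ k → ∫ ω, ⟪Y j ω, Y k ω⟫ ∂P = 0 := by
    intro j k hjk
    set b := stdOrthonormalBasis ℝ E with hb
    have hrw : ∀ ω, ⟪Y j ω, Y k ω⟫ = ∑ i, ⟪b i, Y j ω⟫ * ⟪b i, Y k ω⟫ := by
      intro ω
      rw [← b.sum_inner_mul_inner (Y j ω) (Y k ω)]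
      exact Finset.sum_congr rfl fun i _ => by rw [real_inner_comm (Y j ω)]
    have hφ : ∀ i, Measurable fun x : E => ⟪b i, x⟫ :=
      fun i => (Continuous.inner continuous_const continuous_id).measurable
    have hint : ∀ (l : Fin K) i, Integrable (fun ω => ⟪b i, Y l ω⟫) P :=
      fun l i => ((hY2 l).const_inner (b i)).integrable one_le_two
    calc ∫ ω, ⟪Y j ω, Y k ω⟫ ∂P
        = ∫ ω, ∑ i, ⟪b i, Y j ω⟫ * ⟪b i, Y k ω⟫ ∂P := by
          exact integral_congr_ae (Filter.Eventually.of_forall hrw)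
      _ = ∑ i, ∫ ω, ⟪b i, Y j ω⟫ * ⟪b i, Y k ω⟫ ∂P := by
          refine integral_finset_sum _ (fun i _ => ?_)
          exact ((hindepY.indepFun hjk).comp (hφ i) (hφ i)).integrable_mul
            (hint j i) (hint k i)
      _ = ∑ i, (∫ ω, ⟪b i, Y j ω⟫ ∂P) * (∫ ω, ⟪b i, Y k ω⟫ ∂P) := by
          refine Finset.sum_congr rfl fun i _ => ?_
          exact ((hindepY.indepFun hjk).comp (hφ i) (hφ i)).integral_fun_mul_eq_mul_integral
            (hint j i).aestronglyMeasurable (hint k i).aestronglyMeasurable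
      _ = 0 := by
          refine Finset.sum_eq_zero fun i _ => ?_
          rw [integral_inner (hYi j) (b i), hY0 j, inner_zero_right]
          ring
  -- second moment of the sum of centered variables
  have hSsq : ∫ ω, ‖S ω‖ ^ 2 ∂P = ∑ k, ∫ ω, ‖Y k ω‖ ^ 2 ∂P := by
    have h1 : ∀ ω, ‖S ω‖ ^ 2 = ∑ j, ∑ k, ⟪Y j ω, Y k ω⟫ := by
      intro ω
      rw [← real_inner_self_eq_norm_sq, hSdef]
      simp_rw [sum_inner, inner_sum]
    calc ∫ ω, ‖S ω‖ ^ 2 ∂P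
        = ∫ ω, ∑ j, ∑ k, ⟪Y j ω, Y k ω⟫ ∂P :=
          integral_congr_ae (Filter.Eventually.of_forall h1)
      _ = ∑ j, ∑ k, ∫ ω, ⟪Y j ω, Y k ω⟫ ∂P := by
          rw [integral_finset_sum _ (fun j _ => integrable_finset_sum _
            (fun k _ => aux_integrable_inner P (hY2 j) (hY2 k)))]
          exact Finset.sum_congr rfl fun j _ =>
            integral_finset_sum _ (fun k _ => aux_integrable_inner P (hY2 j) (hY2 k))
      _ = ∑ k, ∫ ω, ⟪Y k ω, Y k ω⟫ ∂P := by
          refine Finset.sum_congr rfl fun j _ => ?_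
          exact Finset.sum_eq_single j (fun k _ hkj => cross j k (Ne.symm hkj))
            (fun h => absurd (Finset.mem_univ j) h)
      _ = ∑ k, ∫ ω, ‖Y k ω‖ ^ 2 ∂P := by
          refine Finset.sum_congr rfl fun k _ => ?_
          refine integral_congr_ae (Filter.Eventually.of_forall fun ω => ?_)
          exact real_inner_self_eq_norm_sq _
  set μ : E := (K:ℝ)⁻¹ • ∑ k, g k with hμdef
  have pointwise : ∀ ω, ‖(K : ℝ)⁻¹ • (∑ k, ghat k ω)‖ ^ 2
      = ‖μ‖ ^ 2 + (2 * ⟪μ, (K:ℝ)⁻¹ • S ω⟫ + ‖(K:ℝ)⁻¹ • S ω‖ ^ 2) := by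
    intro ω
    have hdecomp : (K:ℝ)⁻¹ • (∑ k, ghat k ω) = μ + (K:ℝ)⁻¹ • S ω := by
      rw [hμdef, ← smul_add]
      congr 1
      rw [hSdef, ← Finset.sum_add_distrib]
      exact Finset.sum_congr rfl fun k _ => by simp [hYdef]
    rw [hdecomp, norm_add_sq_real]; ring
  have h1 : Integrable (fun ω => 2 * ⟪μ, (K:ℝ)⁻¹ • S ω⟫) P :=
    ((hSi.smul ((K:ℝ)⁻¹)).const_inner μ).const_mul 2
  have h2 : Integrable (fun ω => ‖(K:ℝ)⁻¹ • S ω‖ ^ 2) P :=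
    ((hS2.const_smul ((K:ℝ)⁻¹)).norm).integrable_sq
  have hmid : ∫ ω, 2 * ⟪μ, (K:ℝ)⁻¹ • S ω⟫ ∂P = 0 := by
    rw [integral_const_mul,
      integral_inner (f := fun a => (K:ℝ)⁻¹ • S a) (hSi.smul ((K:ℝ)⁻¹)) μ,
      integral_smul, hS0, smul_zero, inner_zero_right, mul_zero]
  have hthird : ∫ ω, ‖(K:ℝ)⁻¹ • S ω‖ ^ 2 ∂P = ((K:ℝ)⁻¹) ^ 2 * ∑ k, ∫ ω, ‖Y k ω‖ ^ 2 ∂P := by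
    have : ∀ ω, ‖(K:ℝ)⁻¹ • S ω‖ ^ 2 = ((K:ℝ)⁻¹) ^ 2 * ‖S ω‖ ^ 2 := by
      intro ω
      rw [norm_smul, mul_pow, Real.norm_eq_abs, sq_abs]
    rw [integral_congr_ae (Filter.Eventually.of_forall this), integral_const_mul, hSsq]
  have hsplit : ∫ ω, ‖(K : ℝ)⁻¹ • (∑ k, ghat k ω)‖ ^ 2 ∂P
      = ‖μ‖ ^ 2 + ((K:ℝ)⁻¹) ^ 2 * ∑ k, ∫ ω, ‖Y k ω‖ ^ 2 ∂P := by
    have h12 : Integrable (fun ω => 2 * ⟪μ, (K:ℝ)⁻¹ • S ω⟫ + ‖(K:ℝ)⁻¹ • S ω‖ ^ 2) P :=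
      h1.add h2
    rw [integral_congr_ae (Filter.Eventually.of_forall pointwise),
      integral_add (integrable_const _) h12, integral_add h1 h2,
      integral_const, hmid, hthird]
    simp
  -- bounds
  set Sg : ℝ := ∑ k, ‖g k‖ ^ 2 with hSg
  have hμbound : ‖μ‖ ^ 2 ≤ (K:ℝ)⁻¹ * Sg := by
    have h3 : ‖μ‖ ^ 2 = ((K:ℝ)⁻¹) ^ 2 * ‖∑ k, g k‖ ^ 2 := by
      rw [hμdef, norm_smul, mul_pow, Real.norm_eq_abs, sq_abs]
    have h4 : ‖∑ k, g k‖ ^ 2 ≤ (K:ℝ) * Sg := by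
      calc ‖∑ k, g k‖ ^ 2 ≤ (∑ k, ‖g k‖) ^ 2 := by
            apply pow_le_pow_left₀ (norm_nonneg _) (norm_sum_le _ _)
        _ ≤ (K:ℝ) * Sg := by
            have h5 := sq_sum_le_card_mul_sum_sq (s := (Finset.univ : Finset (Fin K)))
              (f := fun k => ‖g k‖)
            simpa [hSg, Finset.card_univ] using h5
    rw [h3]
    calc ((K:ℝ)⁻¹) ^ 2 * ‖∑ k, g k‖ ^ 2 ≤ ((K:ℝ)⁻¹) ^ 2 * ((K:ℝ) * Sg) :=
          mul_le_mul_of_nonneg_left h4 (sq_nonneg _)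
      _ = (K:ℝ)⁻¹ * Sg := by field_simp
  have hT : ∑ k, ∫ ω, ‖Y k ω‖ ^ 2 ∂P ≤ B1 * Sg + (K:ℝ) * B2 ^ 2 := by
    calc ∑ k, ∫ ω, ‖Y k ω‖ ^ 2 ∂P ≤ ∑ k : Fin K, (B1 * ‖g k‖ ^ 2 + B2 ^ 2) :=
          Finset.sum_le_sum fun k _ => hvar k
      _ = B1 * Sg + (K:ℝ) * B2 ^ 2 := by
          rw [Finset.sum_add_distrib, ← Finset.mul_sum]
          simp [hSg, mul_comm]
  have hkey : (K:ℝ)⁻¹ * Sg + ((K:ℝ)⁻¹) ^ 2 * (B1 * Sg + (K:ℝ) * B2 ^ 2)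
      = ((B1 + K) / (K : ℝ) ^ 2) * Sg + B2 ^ 2 / (K : ℝ) := by
    field_simp
    ring
  rw [hsplit, ← hkey]
  have := mul_le_mul_of_nonneg_left hT (sq_nonneg ((K:ℝ)⁻¹))
  linarith
end
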